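/- If a : 𝕋 → ℂ is continuous and F : 𝕋 → M is ν-admissible, then the function aF : s ↦ a(s)·F(s) is ν-admissible, and ‖(aF)(P,S)‖_ν ≤ (sup_{s∈𝕋} |a(s)|)·‖F(P,S)‖_ν for every tagged partition (P,S). -/

import Mathlib

open ContinuousLinearMap

/-- The unit circle `𝕋 ⊆ ℂ` as a type, with its Borel σ-algebra (induced from `ℂ`). -/
abbrev Torus : Type := ↥(Metric.sphere (0 : ℂ) 1)

/-- A finite Borel partition of `X`. -/
structure BorelPartition (X : Type*) [MeasurableSpace X] where
  n : ℕ
  piece : Fin n → Set X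
  meas : ∀ i, MeasurableSet (piece i)
  disj : Pairwise (Function.onFun Disjoint piece)
  cover : (⋃ i, piece i) = Set.univ

/-- A tagged finite Borel partition of `X`: a finite Borel partition together
with a tag `tag i ∈ piece i` for each piece. -/
structure TaggedPartition (X : Type*) [MeasurableSpace X] where
  n : ℕ
  piece : Fin n → Set X
  meas : ∀ i, MeasurableSet (piece i)
  disj : Pairwise (Function.onFun Disjoint piece)
  cover : (⋃ i, piece i) = Set.univ
  tag : Fin n → X
  tag_mem : ∀ i, tag i ∈ piece i

/-- The (untagged) partition of a tagged partition `P` refines `Q`. -/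
def TaggedPartition.Refines {X : Type*} [MeasurableSpace X]
    (P : TaggedPartition X) (Q : BorelPartition X) : Prop :=
  ∀ i : Fin P.n, ∃ j : Fin Q.n, P.piece i ⊆ Q.piece j

variable {M : Type*} [NormedAddCommGroup M] [InnerProductSpace ℂ M] [CompleteSpace M]

/-- An operator-valued measure on `X`: positive operator values on Borel sets and
weak countable additivity. -/
structure OpMeasure (X : Type*) [MeasurableSpace X] (M : Type*) [NormedAddCommGroup M]
    [InnerProductSpace ℂ M] [CompleteSpace M] where
  toFun : Set X → (M →L[ℂ] M)
  pos : ∀ ω : Set X, MeasurableSet ω → (toFun ω).IsPositive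
  countably_additive : ∀ (e f : M) (g : ℕ → Set X), (∀ k, MeasurableSet (g k)) →
    Pairwise (Function.onFun Disjoint g) →
    HasSum (fun k => (inner ℂ (toFun (g k) e) f : ℂ)) (inner ℂ (toFun (⋃ k, g k) e) f)

/-- `⟨F(P,S), G(P,S)⟩_ν := ∑_j ⟨ν(ω_j) F(s_j), G(s_j)⟩`. -/
noncomputable def pairSumNu {X : Type*} [MeasurableSpace X]
    (ν : Set X → (M →L[ℂ] M)) (P : TaggedPartition X) (F G : X → M) : ℂ :=
  ∑ i : Fin P.n, (inner ℂ (ν (P.piece i) (F (P.tag i))) (G (P.tag i)) : ℂ)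

/-- `‖F(P,S)‖_ν²`. -/
noncomputable def normSqNu {X : Type*} [MeasurableSpace X]
    (ν : Set X → (M →L[ℂ] M)) (P : TaggedPartition X) (F : X → M) : ℝ :=
  (pairSumNu ν P F F).re

/-- `‖F(P,S) − F(P′,S′)‖_ν²` (the mixed-refinement square distance). -/
noncomputable def crossSqNu {X : Type*} [MeasurableSpace X]
    (ν : Set X → (M →L[ℂ] M)) (P P' : TaggedPartition X) (F : X → M) : ℝ :=
  ∑ i : Fin P.n, ∑ j : Fin P'.n,
    ((inner ℂ (ν (P.piece i ∩ P'.piece j) (F (P.tag i) - F (P'.tag j)))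
        (F (P.tag i) - F (P'.tag j)) : ℂ)).re

/-- `F` is ν-admissible: the net of simple approximants `F(P,S)` is bounded and
Cauchy in the ν-seminorm. -/
def NuAdmissible {X : Type*} [MeasurableSpace X]
    (ν : Set X → (M →L[ℂ] M)) (F : X → M) : Prop :=
  (∃ C : ℝ, ∀ P : TaggedPartition X, Real.sqrt (normSqNu ν P F) ≤ C) ∧
  ∀ ε : ℝ, 0 < ε → ∃ Q : BorelPartition X, ∀ P P' : TaggedPartition X,
    P.Refines Q → P'.Refines Q → Real.sqrt (crossSqNu ν P P' F) < ε


/-!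
Multiplying by `a` scales the term `⟪ν(ω) F(s), F(s)⟫` by `|a(s)|² ≤ (sup |a|)²`, which gives the
norm bound and hence boundedness. For the Cauchy property write
`a(s) F(s) - a(s') F(s') = a(s) (F(s) - F(s')) + (a(s) - a(s')) F(s')`. The first part is at most
`sup |a|` times the increments of `F`. By compactness of the circle there is a partition on whose
pieces `a` oscillates by less than `η`; once `P` and `P'` refine it, every nonempty cell
`ωᵢ ∩ ω'ⱼ` has `|a(sᵢ) - a(s'ⱼ)| ≤ η`, and by additivity of `ν` the second part is at most
`η ‖F(P', S')‖_ν`. The two parts are combined by the triangle inequality for the seminorm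
`(uₚ) ↦ (∑ₚ ⟪Tₚ uₚ, uₚ⟫)^{1/2}` of a finite family of positive operators `Tₚ`.
-/

open Set

section PositiveOperators

variable {ι : Type*} [Fintype ι]

theorem ContinuousLinearMap.IsPositive.exists_reApplyInnerSelf_eq_norm_sq {T : M →L[ℂ] M}
    (hT : T.IsPositive) : ∃ S : M →L[ℂ] M, ∀ x, T.reApplyInnerSelf x = ‖S x‖ ^ 2 := by
  obtain ⟨S, rfl⟩ :=
    CStarAlgebra.nonneg_iff_eq_star_mul_self.mp ((nonneg_iff_isPositive T).mpr hT)
  exact ⟨S, fun x => by rw [apply_norm_sq_eq_inner_adjoint_left, star_eq_adjoint]; rfl⟩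

/-- Writing `T i = S i† S i`, the left-hand side is the `ℓ²` norm of `(S i (u i + w i))ᵢ`. -/
theorem sqrt_sum_reApplyInnerSelf_add_le {T : ι → M →L[ℂ] M} (hT : ∀ i, (T i).IsPositive)
    (u w : ι → M) :
    √(∑ i, (T i).reApplyInnerSelf (u i + w i)) ≤
      √(∑ i, (T i).reApplyInnerSelf (u i)) + √(∑ i, (T i).reApplyInnerSelf (w i)) := by
  choose S hS using fun i => (hT i).exists_reApplyInnerSelf_eq_norm_sq
  have hnorm : ∀ v : ι → M, √(∑ i, (T i).reApplyInnerSelf (v i)) =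
      ‖(WithLp.toLp 2 (fun i => S i (v i)) : PiLp 2 (fun _ : ι => M))‖ := by
    intro v
    simp only [hS, PiLp.norm_eq_of_L2]
  rw [hnorm, hnorm, hnorm]
  refine le_of_eq_of_le ?_ (norm_add_le _ _)
  congr 1
  ext i
  simp

theorem sum_reApplyInnerSelf_smul_le {𝕜 E : Type*} [RCLike 𝕜] [NormedAddCommGroup E]
    [InnerProductSpace 𝕜 E] {T : ι → E →L[𝕜] E} (hT : ∀ i, (T i).IsPositive)
    {c : ι → 𝕜} {K : ℝ} (u : ι → E) (hc : ∀ i, (T i).reApplyInnerSelf (u i) ≠ 0 → ‖c i‖ ≤ K) :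
    ∑ i, (T i).reApplyInnerSelf (c i • u i) ≤ K ^ 2 * ∑ i, (T i).reApplyInnerSelf (u i) := by
  rw [Finset.mul_sum]
  refine Finset.sum_le_sum fun i _ => ?_
  rw [reApplyInnerSelf_smul]
  by_cases h : (T i).reApplyInnerSelf (u i) = 0
  · simp [h]
  · exact mul_le_mul_of_nonneg_right (pow_le_pow_left₀ (norm_nonneg _) (hc i h) 2)
      ((hT i).re_inner_nonneg_left _)

end PositiveOperators

theorem Real.sqrt_le_mul_sqrt_of_le_sq_mul {x y K : ℝ} (hK : 0 ≤ K) (h : x ≤ K ^ 2 * y) :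
    √x ≤ K * √y :=
  calc √x ≤ √(K ^ 2 * y) := Real.sqrt_le_sqrt h
    _ = K * √y := by rw [Real.sqrt_mul (sq_nonneg K), Real.sqrt_sq hK]

namespace OpMeasure

variable {X : Type*} [MeasurableSpace X] (ν : OpMeasure X M)

theorem inner_empty (e f : M) : (inner ℂ (ν.toFun ∅ e) f : ℂ) = 0 := by
  have h := ν.countably_additive e f (fun _ => ∅) (fun _ => .empty) fun _ _ _ => disjoint_empty _
  rw [iUnion_empty] at h
  exact (summable_const_iff _).mp h.summable

open Classical in
noncomputable def innerVectorMeasure (e f : M) : MeasureTheory.VectorMeasure X ℂ where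
  measureOf' s := if MeasurableSet s then inner ℂ (ν.toFun s e) f else 0
  empty' := by simp [ν.inner_empty]
  not_measurable' _ hs := if_neg hs
  m_iUnion' g hg hdisj := by
    simpa [hg, MeasurableSet.iUnion hg] using ν.countably_additive e f g hg hdisj

theorem sum_reApplyInnerSelf_inter (P : TaggedPartition X) {S : Set X} (hS : MeasurableSet S)
    (v : M) :
    ∑ i, (ν.toFun (P.piece i ∩ S)).reApplyInnerSelf v = (ν.toFun S).reApplyInnerSelf v := by
  have hmeas : ∀ i, MeasurableSet (P.piece i ∩ S) := fun i => (P.meas i).inter hS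
  have hadd := MeasureTheory.VectorMeasure.of_disjoint_iUnion (v := ν.innerVectorMeasure v v) hmeas
    fun i j hij => (P.disj hij).mono inter_subset_left inter_subset_left
  rw [← iUnion_inter, P.cover, univ_inter, tsum_fintype] at hadd
  simp only [innerVectorMeasure, MeasureTheory.VectorMeasure.coe_mk, hS, hmeas, if_true] at hadd
  simp only [reApplyInnerSelf_apply, hadd, map_sum]

theorem reApplyInnerSelf_empty (v : M) : (ν.toFun ∅).reApplyInnerSelf v = 0 := by
  simp [reApplyInnerSelf_apply, ν.inner_empty]

end OpMeasure

namespace BorelPartition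

variable {X : Type*} [MeasurableSpace X]

def ofFinCover {n : ℕ} (g : Fin n → Set X) (hg : ∀ i, MeasurableSet (g i))
    (hcover : ⋃ i, g i = univ) : BorelPartition X where
  n := n
  piece := disjointed g
  meas i := by
    rw [disjointed_eq_inter_compl]
    exact (hg i).inter (.iInter fun j => .iInter fun _ => (hg j).compl)
  disj := disjoint_disjointed g
  cover := iUnion_disjointed.trans hcover

theorem piece_ofFinCover_subset {n : ℕ} {g : Fin n → Set X} {hg : ∀ i, MeasurableSet (g i)}
    {hcover : ⋃ i, g i = univ} (k : Fin n) : (ofFinCover g hg hcover).piece k ⊆ g k :=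
  disjointed_subset g k

theorem exists_subset_of_refines_ofFinCover {n : ℕ} {g : Fin n → Set X}
    {hg : ∀ i, MeasurableSet (g i)} {hcover : ⋃ i, g i = univ} {P : TaggedPartition X}
    (hP : P.Refines (ofFinCover g hg hcover)) (i : Fin P.n) : ∃ k, P.piece i ⊆ g k :=
  let ⟨k, hk⟩ := hP i
  ⟨k, hk.trans (piece_ofFinCover_subset k)⟩

def inf (Q₁ Q₂ : BorelPartition X) : BorelPartition X :=
  ofFinCover (fun k => Q₁.piece (finProdFinEquiv.symm k).1 ∩ Q₂.piece (finProdFinEquiv.symm k).2)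
    (fun _ => (Q₁.meas _).inter (Q₂.meas _)) <| eq_univ_of_forall fun x => by
      obtain ⟨i, hi⟩ := mem_iUnion.mp (Q₁.cover ▸ mem_univ x)
      obtain ⟨j, hj⟩ := mem_iUnion.mp (Q₂.cover ▸ mem_univ x)
      exact mem_iUnion.mpr ⟨finProdFinEquiv (i, j), by simpa using ⟨hi, hj⟩⟩

theorem refines_of_refines_inf_left {Q₁ Q₂ : BorelPartition X} {P : TaggedPartition X}
    (hP : P.Refines (Q₁.inf Q₂)) : P.Refines Q₁ := fun i =>
  let ⟨_, hk⟩ := exists_subset_of_refines_ofFinCover hP i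
  ⟨_, hk.trans inter_subset_left⟩

theorem refines_of_refines_inf_right {Q₁ Q₂ : BorelPartition X} {P : TaggedPartition X}
    (hP : P.Refines (Q₁.inf Q₂)) : P.Refines Q₂ := fun i =>
  let ⟨_, hk⟩ := exists_subset_of_refines_ofFinCover hP i
  ⟨_, hk.trans inter_subset_right⟩

theorem exists_subordinate [TopologicalSpace X] [OpensMeasurableSpace X] [CompactSpace X]
    {ι : Type*} {U : ι → Set X} (hU : ∀ i, IsOpen (U i)) (hcover : ⋃ i, U i = univ) :
    ∃ Q : BorelPartition X, ∀ k, ∃ i, Q.piece k ⊆ U i := by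
  obtain ⟨t, ht⟩ := isCompact_univ.elim_finite_subcover U hU hcover.ge
  have hcover' : ⋃ k, U (t.equivFin.symm k) = univ := by
    rw [t.equivFin.symm.surjective.iUnion_comp (fun i => U i), iUnion_subtype]
    exact univ_subset_iff.mp ht
  exact ⟨ofFinCover _ (fun k => (hU _).measurableSet) hcover',
    fun k => ⟨_, piece_ofFinCover_subset k⟩⟩

theorem exists_forall_dist_lt [TopologicalSpace X] [OpensMeasurableSpace X] [CompactSpace X]
    {E : Type*} [PseudoMetricSpace E] {f : X → E} (hf : Continuous f) {η : ℝ} (hη : 0 < η) :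
    ∃ Q : BorelPartition X, ∀ k, ∀ s ∈ Q.piece k, ∀ t ∈ Q.piece k, dist (f s) (f t) < η := by
  obtain ⟨Q, hQ⟩ := exists_subordinate (U := fun x => f ⁻¹' Metric.ball (f x) (η / 2))
    (fun x => Metric.isOpen_ball.preimage hf)
    (eq_univ_of_forall fun x => mem_iUnion.mpr ⟨x, Metric.mem_ball_self (half_pos hη)⟩)
  refine ⟨Q, fun k s hs t ht => ?_⟩
  obtain ⟨x, hx⟩ := hQ k
  have hsx : dist (f s) (f x) < η / 2 := hx hs
  have htx : dist (f t) (f x) < η / 2 := hx ht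
  linarith [dist_triangle_right (f s) (f t) (f x)]

end BorelPartition

theorem TaggedPartition.exists_tags_mem_piece_of_refines {X : Type*} [MeasurableSpace X]
    {P P' : TaggedPartition X} {Q : BorelPartition X} (hP : P.Refines Q) (hP' : P'.Refines Q)
    {i : Fin P.n} {j : Fin P'.n} (hij : (P.piece i ∩ P'.piece j).Nonempty) :
    ∃ k, P.tag i ∈ Q.piece k ∧ P'.tag j ∈ Q.piece k := by
  obtain ⟨k, hk⟩ := hP i
  obtain ⟨l, hl⟩ := hP' j
  obtain ⟨x, hxi, hxj⟩ := hij
  obtain rfl : k = l := by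
    by_contra h
    exact disjoint_left.mp (Q.disj h) (hk hxi) (hl hxj)
  exact ⟨k, hk (P.tag_mem i), hl (P'.tag_mem j)⟩

section Estimates

variable {X : Type*} [MeasurableSpace X]

theorem normSqNu_eq_sum {E : Type*} [NormedAddCommGroup E] [InnerProductSpace ℂ E]
    (ν : Set X → (E →L[ℂ] E)) (P : TaggedPartition X) (G : X → E) :
    normSqNu ν P G = ∑ i, (ν (P.piece i)).reApplyInnerSelf (G (P.tag i)) := by
  rw [normSqNu, pairSumNu, Complex.re_sum]
  rfl

theorem crossSqNu_eq_sum {E : Type*} [NormedAddCommGroup E] [InnerProductSpace ℂ E]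
    (ν : Set X → (E →L[ℂ] E)) (P P' : TaggedPartition X) (G : X → E) :
    crossSqNu ν P P' G = ∑ p : Fin P.n × Fin P'.n,
      (ν (P.piece p.1 ∩ P'.piece p.2)).reApplyInnerSelf (G (P.tag p.1) - G (P'.tag p.2)) := by
  rw [crossSqNu, Fintype.sum_prod_type]
  rfl

theorem sqrt_normSqNu_smul_le (ν : OpMeasure X M) (P : TaggedPartition X) {a : X → ℂ} {K : ℝ}
    (hK : 0 ≤ K) (ha : ∀ s, ‖a s‖ ≤ K) (F : X → M) :
    √(normSqNu ν.toFun P (fun s => a s • F s)) ≤ K * √(normSqNu ν.toFun P F) := by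
  refine Real.sqrt_le_mul_sqrt_of_le_sq_mul hK ?_
  simp only [normSqNu_eq_sum]
  exact sum_reApplyInnerSelf_smul_le (fun i => ν.pos _ (P.meas i)) _ fun i _ => ha _

theorem sum_reApplyInnerSelf_inter_eq_normSqNu (ν : OpMeasure X M) (P P' : TaggedPartition X)
    (F : X → M) :
    ∑ p : Fin P.n × Fin P'.n, (ν.toFun (P.piece p.1 ∩ P'.piece p.2)).reApplyInnerSelf
      (F (P'.tag p.2)) = normSqNu ν.toFun P' F := by
  rw [Fintype.sum_prod_type, Finset.sum_comm, normSqNu_eq_sum]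
  exact Finset.sum_congr rfl fun j _ => ν.sum_reApplyInnerSelf_inter P (P'.meas j) (F (P'.tag j))

theorem sqrt_crossSqNu_smul_le (ν : OpMeasure X M) (P P' : TaggedPartition X) {a : X → ℂ}
    {K η : ℝ} (hK : 0 ≤ K) (hη : 0 ≤ η) (ha : ∀ s, ‖a s‖ ≤ K)
    (hosc : ∀ i j, (P.piece i ∩ P'.piece j).Nonempty → ‖a (P.tag i) - a (P'.tag j)‖ ≤ η)
    (F : X → M) :
    √(crossSqNu ν.toFun P P' (fun s => a s • F s)) ≤
      K * √(crossSqNu ν.toFun P P' F) + η * √(normSqNu ν.toFun P' F) := by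
  set T : Fin P.n × Fin P'.n → M →L[ℂ] M := fun p => ν.toFun (P.piece p.1 ∩ P'.piece p.2)
  have hT : ∀ p, (T p).IsPositive := fun p => ν.pos _ ((P.meas _).inter (P'.meas _))
  have hsplit : ∀ p : Fin P.n × Fin P'.n,
      a (P.tag p.1) • F (P.tag p.1) - a (P'.tag p.2) • F (P'.tag p.2) =
        a (P.tag p.1) • (F (P.tag p.1) - F (P'.tag p.2)) +
          (a (P.tag p.1) - a (P'.tag p.2)) • F (P'.tag p.2) := by
    intro p
    simp only [smul_sub, sub_smul]
    abel
  have hfirst : ∑ p, (T p).reApplyInnerSelf (a (P.tag p.1) • (F (P.tag p.1) - F (P'.tag p.2)))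
      ≤ K ^ 2 * crossSqNu ν.toFun P P' F := by
    rw [crossSqNu_eq_sum]
    exact sum_reApplyInnerSelf_smul_le hT _ fun p _ => ha _
  have hsecond : ∑ p, (T p).reApplyInnerSelf ((a (P.tag p.1) - a (P'.tag p.2)) • F (P'.tag p.2))
      ≤ η ^ 2 * normSqNu ν.toFun P' F := by
    rw [← sum_reApplyInnerSelf_inter_eq_normSqNu ν P P']
    refine sum_reApplyInnerSelf_smul_le hT _ fun p hp => hosc _ _ ?_
    by_contra hempty
    exact hp (by simp only [T, not_nonempty_iff_eq_empty.mp hempty, ν.reApplyInnerSelf_empty])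
  rw [crossSqNu_eq_sum]
  simp only [hsplit]
  exact (sqrt_sum_reApplyInnerSelf_add_le hT _ _).trans <| add_le_add
    (Real.sqrt_le_mul_sqrt_of_le_sq_mul hK hfirst) (Real.sqrt_le_mul_sqrt_of_le_sq_mul hη hsecond)

theorem NuAdmissible.smul [TopologicalSpace X] [OpensMeasurableSpace X] [CompactSpace X]
    {ν : OpMeasure X M} {a : X → ℂ} (ha : Continuous a) {F : X → M}
    (hF : NuAdmissible ν.toFun F) : NuAdmissible ν.toFun (fun s => a s • F s) := by
  set K := ⨆ s, ‖a s‖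
  have haK : ∀ s, ‖a s‖ ≤ K := le_ciSup (isCompact_range (continuous_norm.comp ha)).bddAbove
  have hK : 0 ≤ K := Real.iSup_nonneg fun s => norm_nonneg _
  obtain ⟨⟨C, hC⟩, hcauchy⟩ := hF
  refine ⟨⟨K * C, fun P => (sqrt_normSqNu_smul_le ν P hK haK F).trans
    (mul_le_mul_of_nonneg_left (hC P) hK)⟩, fun ε hε => ?_⟩
  -- `|C|` spares exhibiting a tagged partition to see that `C ≥ 0`
  have hD : 0 < K + |C| + 1 := by positivity
  set η := ε / (K + |C| + 1)
  have hη : 0 < η := div_pos hε hD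
  obtain ⟨Qa, hQa⟩ := BorelPartition.exists_forall_dist_lt ha hη
  obtain ⟨QF, hQF⟩ := hcauchy η hη
  refine ⟨Qa.inf QF, fun P P' hP hP' => ?_⟩
  have hosc : ∀ i j, (P.piece i ∩ P'.piece j).Nonempty → ‖a (P.tag i) - a (P'.tag j)‖ ≤ η := by
    intro i j hij
    obtain ⟨k, hi, hj⟩ := TaggedPartition.exists_tags_mem_piece_of_refines
      (BorelPartition.refines_of_refines_inf_left hP)
      (BorelPartition.refines_of_refines_inf_left hP') hij
    rw [← dist_eq_norm]
    exact (hQa k _ hi _ hj).le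
  calc √(crossSqNu ν.toFun P P' fun s => a s • F s)
      ≤ K * √(crossSqNu ν.toFun P P' F) + η * √(normSqNu ν.toFun P' F) :=
        sqrt_crossSqNu_smul_le ν P P' hK hη.le haK hosc F
    _ ≤ K * η + η * |C| := by
        gcongr
        · exact (hQF P P' (BorelPartition.refines_of_refines_inf_right hP)
            (BorelPartition.refines_of_refines_inf_right hP')).le
        · exact (hC P').trans (le_abs_self C)
    _ = ε * ((K + |C|) / (K + |C| + 1)) := by ring
    _ < ε := mul_lt_of_lt_one_right hε ((div_lt_one hD).mpr (lt_add_one _))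

end Estimates

/-- If `a : 𝕋 → ℂ` is continuous and `F` is ν-admissible, then `aF` is
ν-admissible and `‖(aF)(P,S)‖_ν ≤ (sup |a|) ⬝ ‖F(P,S)‖_ν` for every tagged
partition. -/
theorem stmt15 (ν : OpMeasure Torus M)
    (a : Torus → ℂ) (ha : Continuous a)
    (F : Torus → M) (hF : NuAdmissible ν.toFun F) :
    NuAdmissible ν.toFun (fun s => a s • F s) ∧
    ∀ P : TaggedPartition Torus,
      Real.sqrt (normSqNu ν.toFun P (fun s => a s • F s)) ≤
        (⨆ s : Torus, ‖a s‖) * Real.sqrt (normSqNu ν.toFun P F) := by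
  have haK : ∀ s, ‖a s‖ ≤ ⨆ s, ‖a s‖ :=
    le_ciSup (isCompact_range (continuous_norm.comp ha)).bddAbove
  have hK : 0 ≤ ⨆ s, ‖a s‖ := Real.iSup_nonneg fun s => norm_nonneg _
  exact ⟨hF.smul ha, fun P => sqrt_normSqNu_smul_le ν P hK haK F⟩
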